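/- If (π̃, S₀ ∩ h⁻¹(s̃₀)) ⇒* (s̃ₙ, stₙ) for a path π̃ = s̃₀ → ... → s̃ₙ in the abstract model starting at an abstract initial state s̃₀, and stₙ ≠ ∅, then there is a concrete path corresponding to π̃ beginning at a concrete initial state s₀ ∈ S₀ ∩ h⁻¹(s̃₀) and ending at some state in stₙ. -/

import Mathlib

/-- An edge label of an abstract counterexample path: a temporal transition
labelled by an abstract action, or an epistemic transition labelled by an
agent. -/
inductive Edge (Act' Ag : Type) where
  | temp : Act' → Edge Act' Ag
  | epi : Ag → Edge Act' Ag

/-- The data of a concrete interpreted system together with its abstraction: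
concrete states `S` with labelled transitions `step`, local-state projections
`loc`, reachable states `Reach`, initial states `S0`; abstract states `S'`
with transitions `astep`, epistemic relations `aeps`, and abstract initial
states `aS0`; the abstraction function `h` on states and `hA` on actions. -/
structure Frame (S S' Act Act' Ag L : Type) where
  step : S → Act → S → Prop
  loc : Ag → S → L
  Reach : Set S
  S0 : Set S
  astep : S' → Act' → S' → Prop
  aeps : Ag → S' → S' → Prop
  aS0 : Set S'
  h : S → S'
  hA : Act → Act'

variable {S S' Act Act' Ag L : Type}

/-- One forward transition rule: `TemporalCheck` takes all successors of `st`
under concrete actions mapping to the abstract action, intersected with the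
preimage of the target abstract state; `EpistemicCheck` takes the reachable
concrete states in the preimage of the target that share the agent's local
state with some state in `st` (the union-over-all-witness-paths variant, i.e.
the reachable concrete states over the target abstract state). -/
def FwdStep (F : Frame S S' Act Act' Ag L) :
    Edge Act' Ag → S' → Set S → Set S
  | Edge.temp aa, tgt, st =>
      {t | (∃ s ∈ st, ∃ a, F.hA a = aa ∧ F.step s a t) ∧ F.h t = tgt}
  | Edge.epi ag, tgt, st =>
      {t | t ∈ F.Reach ∧ F.h t = tgt ∧ ∃ s ∈ st, F.loc ag s = F.loc ag t}

/-- The forward traversal `⇒*` along an abstract path, given as the list of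
its edges paired with their target abstract states. -/
def Fwd (F : Frame S S' Act Act' Ag L) :
    List (Edge Act' Ag × S') → Set S → Set S
  | [], st => st
  | (e, tgt) :: rest, st => Fwd F rest (FwdStep F e tgt st)

/-- The abstract path starting at `src` with the given edges is a path of the
abstract model. -/
def AValid (F : Frame S S' Act Act' Ag L) :
    S' → List (Edge Act' Ag × S') → Prop
  | _, [] => True
  | src, (Edge.temp aa, tgt) :: rest => F.astep src aa tgt ∧ AValid F tgt rest
  | src, (Edge.epi ag, tgt) :: rest => F.aeps ag src tgt ∧ AValid F tgt rest

/-- `CPath F s pi t`: there is a concrete path from `s` to `t` corresponding to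
the abstract path with edge list `pi`: states map under `h` to the abstract
states, temporal transitions are matched by concrete actions in `h_A⁻¹`, and
epistemic transitions by concrete epistemic relations (equality of the agent's
local states) with reachable targets. -/
inductive CPath (F : Frame S S' Act Act' Ag L) :
    S → List (Edge Act' Ag × S') → S → Prop
  | nil (s : S) : CPath F s [] s
  | temp {s t u : S} {aa : Act'} {a : Act} {tgt : S'}
      {rest : List (Edge Act' Ag × S')} :
      F.hA a = aa → F.step s a t → F.h t = tgt → CPath F t rest u →
      CPath F s ((Edge.temp aa, tgt) :: rest) u
  | epi {s t u : S} {ag : Ag} {tgt : S'} {rest : List (Edge Act' Ag × S')} :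
      t ∈ F.Reach → F.h t = tgt → F.loc ag s = F.loc ag t → CPath F t rest u →
      CPath F s ((Edge.epi ag, tgt) :: rest) u

theorem CPath.exists_cons_of_mem_fwdStep {F : Frame S S' Act Act' Ag L} {e : Edge Act' Ag}
    {tgt : S'} {st : Set S} {m u : S} {rest : List (Edge Act' Ag × S')}
    (hm : m ∈ FwdStep F e tgt st) (hpath : CPath F m rest u) :
    ∃ s ∈ st, CPath F s ((e, tgt) :: rest) u := by
  cases e with
  | temp aa =>
    obtain ⟨⟨s, hs, a, ha, hstep⟩, hh⟩ := hm
    exact ⟨s, hs, CPath.temp ha hstep hh hpath⟩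
  | epi ag =>
    obtain ⟨hr, hh, s, hs, hloc⟩ := hm
    exact ⟨s, hs, CPath.epi hr hh hloc hpath⟩

theorem CPath.exists_of_mem_fwd {F : Frame S S' Act Act' Ag L} {pi : List (Edge Act' Ag × S')}
    {st : Set S} {t : S} (ht : t ∈ Fwd F pi st) : ∃ s ∈ st, CPath F s pi t := by
  induction pi generalizing st with
  | nil => exact ⟨t, ht, CPath.nil t⟩
  | cons _ rest ih =>
    obtain ⟨m, hm, hpath⟩ := ih ht
    exact CPath.exists_cons_of_mem_fwdStep hm hpath

theorem fwd_sound_from_initial_general (F : Frame S S' Act Act' Ag L) (src : S')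
    (pi : List (Edge Act' Ag × S'))
    (hne : (Fwd F pi (F.S0 ∩ F.h ⁻¹' {src})).Nonempty) :
    ∃ s0 ∈ F.S0 ∩ F.h ⁻¹' {src},
      ∃ t ∈ Fwd F pi (F.S0 ∩ F.h ⁻¹' {src}), CPath F s0 pi t := by
  obtain ⟨t, ht⟩ := hne
  obtain ⟨s0, hs0, hpath⟩ := CPath.exists_of_mem_fwd ht
  exact ⟨s0, hs0, t, ht, hpath⟩

/-- If the forward traversal of an abstract path `pi` starting at an abstract
initial state `src`, from the set `S₀ ∩ h⁻¹(src)`, yields a nonempty set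
`stₙ`, then there is a concrete path corresponding to `pi` beginning at a
concrete initial state in `S₀ ∩ h⁻¹(src)` and ending at some state in `stₙ`. -/
theorem fwd_sound_from_initial (F : Frame S S' Act Act' Ag L) (src : S')
    (hsrc : src ∈ F.aS0)
    (pi : List (Edge Act' Ag × S'))
    (hvalid : AValid F src pi)
    (hne : (Fwd F pi (F.S0 ∩ F.h ⁻¹' {src})).Nonempty) :
    ∃ s0 ∈ F.S0 ∩ F.h ⁻¹' {src},
      ∃ t ∈ Fwd F pi (F.S0 ∩ F.h ⁻¹' {src}), CPath F s0 pi t :=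
  fwd_sound_from_initial_general F src pi hne
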